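/- arXiv:1902.01065 — 3 statements merged into one kernel-verified Lean document; each statement's English description precedes it below -/
import Mathlib

section
/- Let $u \colon \mathbb{S}^1 \to \mathbb{R}$ be a positive $C^1$ function on the circle, and let $d\sigma = (2\pi)^{-1}d\theta$ be the uniform probability measure on $\mathbb{S}^1$. Then $\int_{\mathbb{S}^1} |u'|^2\,d\sigma + \tfrac14\left(\int_{\mathbb{S}^1} u^{-2}\,d\sigma\right)^{-1} \ge \tfrac14 \int_{\mathbb{S}^1} u^2\,d\sigma$. -/
/-!
With `B = ∫ u⁻²`, the phase `ψ(θ) = (π / B) ∫₀^θ u⁻²` gains exactly `π` over a period, so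
`z = u e^{iψ}` is `2π`-antiperiodic. Hence `z` is `4π`-periodic with mean zero, and Wirtinger's
inequality on `[0, 4π]` (Parseval plus `|n| ≥ 1` for the surviving Fourier modes) gives
`∫ |z|² ≤ 4 ∫ |z'|²` over one period of `u`. Since `|z| = u` and
`|z'|² = u'² + u² ψ'² = u'² + (π / B)² u⁻²`, this reads `∫ u² ≤ 4 (∫ u'² + π² / B)`.
-/

open Real MeasureTheory intervalIntegral

open Complex in
theorem norm_fourierCoeffOn_le {T : ℝ} (hT : 0 < T) {f f' : ℝ → ℂ}
    (hf : ∀ x, HasDerivAt f (f' x) x) (hf' : Continuous f') (hfT : f T = f 0)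
    {n : ℤ} (hn : n ≠ 0) :
    ‖fourierCoeffOn hT f n‖ ≤ T / (2 * π) * ‖fourierCoeffOn hT f' n‖ := by
  rw [fourierCoeffOn_of_hasDerivAt hT hn (fun x _ ↦ hf x) (hf'.intervalIntegrable _ _), hfT,
    sub_self, mul_zero, zero_sub, ofReal_zero, sub_zero]
  have hn' : (1 : ℝ) ≤ |(n : ℝ)| := by exact_mod_cast Int.one_le_abs hn
  have hnorm : ‖1 / (-2 * π * I * n) * -(T * fourierCoeffOn hT f' n)‖
      = T / (2 * π * |(n : ℝ)|) * ‖fourierCoeffOn hT f' n‖ := by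
    simp [abs_of_pos hT, abs_of_pos pi_pos]
    ring
  rw [hnorm]
  gcongr T / ?_ * _
  exact le_mul_of_one_le_right (by positivity) hn'

theorem hasSum_sq_fourierCoeffOn_of_continuous {a b : ℝ} (hab : a < b) {f : ℝ → ℂ}
    (hf : Continuous f) :
    HasSum (fun n ↦ ‖fourierCoeffOn hab f n‖ ^ 2) ((b - a)⁻¹ • ∫ x in a..b, ‖f x‖ ^ 2) :=
  hasSum_sq_fourierCoeffOn hab
    ((memLp_two_iff_integrable_sq_norm hf.aestronglyMeasurable).2 (hf.norm.pow 2).integrableOn_Ioc)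

theorem wirtinger_inequality {T : ℝ} (hT : 0 < T) {f f' : ℝ → ℂ}
    (hf : ∀ x, HasDerivAt f (f' x) x) (hf' : Continuous f') (hper : Function.Periodic f T)
    (hmean : ∫ x in (0 : ℝ)..T, f x = 0) :
    ∫ x in (0 : ℝ)..T, ‖f x‖ ^ 2 ≤ (T / (2 * π)) ^ 2 * ∫ x in (0 : ℝ)..T, ‖f' x‖ ^ 2 := by
  have hfc : Continuous f := Differentiable.continuous fun x ↦ (hf x).differentiableAt
  have hcoeff (n : ℤ) :
      ‖fourierCoeffOn hT f n‖ ^ 2 ≤ (T / (2 * π)) ^ 2 * ‖fourierCoeffOn hT f' n‖ ^ 2 := by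
    rcases eq_or_ne n 0 with rfl | hn
    · simp only [fourierCoeffOn_eq_integral, neg_zero, fourier_zero, one_smul, hmean, smul_zero,
        norm_zero, zero_pow two_ne_zero]
      positivity
    · rw [← mul_pow]
      have hfT : f T = f 0 := by simpa using hper 0
      exact pow_le_pow_left₀ (norm_nonneg _) (norm_fourierCoeffOn_le hT hf hf' hfT hn) 2
  have h := hasSum_le hcoeff (hasSum_sq_fourierCoeffOn_of_continuous hT hfc)
    ((hasSum_sq_fourierCoeffOn_of_continuous hT hf').mul_left _)
  rwa [sub_zero, smul_eq_mul, smul_eq_mul, mul_left_comm,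
    mul_le_mul_iff_of_pos_left (by positivity)] at h

namespace Function

variable {E : Type*} [NormedAddCommGroup E] [NormedSpace ℝ E] {f : ℝ → E} {T : ℝ}

theorem Periodic.intervalIntegral_two_mul (hf : Periodic f T) (hfc : Continuous f) :
    ∫ x in (0 : ℝ)..2 * T, f x = (2 : ℝ) • ∫ x in (0 : ℝ)..T, f x := by
  have h := hf.intervalIntegral_add_zsmul_eq 2 0 fun _ _ ↦ hfc.intervalIntegrable _ _
  simp only [zero_add, two_zsmul, ← two_mul] at h
  rw [h, two_smul]

theorem Antiperiodic.intervalIntegral_two_mul_eq_zero (hf : Antiperiodic f T)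
    (hfc : Continuous f) : ∫ x in (0 : ℝ)..2 * T, f x = 0 := by
  have hshift : ∫ x in T..2 * T, f x = -∫ x in (0 : ℝ)..T, f x := by
    have h := intervalIntegral.integral_comp_add_right f T (a := 0) (b := T)
    rw [zero_add, ← two_mul] at h
    simp only [← h, hf _, intervalIntegral.integral_neg]
  rw [← intervalIntegral.integral_add_adjacent_intervals (hfc.intervalIntegrable 0 T)
    (hfc.intervalIntegrable T (2 * T)), hshift, add_neg_cancel]

theorem Antiperiodic.hasDerivAt_antiperiodic {f' : ℝ → E} (hf : Antiperiodic f T)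
    (hderiv : ∀ x, HasDerivAt f (f' x) x) : Antiperiodic f' T := fun x ↦ by
  have hshift : HasDerivAt (fun y ↦ f (y + T)) (f' (x + T)) x := (hderiv (x + T)).comp_add_const x T
  rw [show (fun y ↦ f (y + T)) = -f from funext hf] at hshift
  exact hshift.unique (hderiv x).neg

end Function

theorem Function.Antiperiodic.intervalIntegral_norm_sq_le {T : ℝ} (hT : 0 < T) {f f' : ℝ → ℂ}
    (hanti : Antiperiodic f T) (hf : ∀ x, HasDerivAt f (f' x) x) (hf' : Continuous f') :
    ∫ x in (0 : ℝ)..T, ‖f x‖ ^ 2 ≤ (T / π) ^ 2 * ∫ x in (0 : ℝ)..T, ‖f' x‖ ^ 2 := by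
  have hfc : Continuous f := Differentiable.continuous fun x ↦ (hf x).differentiableAt
  have hdouble {g : ℝ → ℂ} (hg : Antiperiodic g T) (hgc : Continuous g) :
      ∫ x in (0 : ℝ)..2 * T, ‖g x‖ ^ 2 = 2 * ∫ x in (0 : ℝ)..T, ‖g x‖ ^ 2 :=
    Periodic.intervalIntegral_two_mul (fun x ↦ by simp only [hg x, norm_neg])
      (hgc.norm.pow 2)
  have h := wirtinger_inequality (by positivity) hf hf' hanti.periodic_two_mul
    (hanti.intervalIntegral_two_mul_eq_zero hfc)
  rw [hdouble hanti hfc, hdouble (hanti.hasDerivAt_antiperiodic hf) hf',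
    show 2 * T / (2 * π) = T / π by field_simp] at h
  linarith

open Complex in
theorem intervalIntegral_sq_le_of_phase {T : ℝ} (hT : 0 < T) {u u' ψ ψ' : ℝ → ℝ}
    (hper : Function.Periodic u T) (hu : ∀ x, HasDerivAt u (u' x) x) (hu' : Continuous u')
    (hψ : ∀ x, HasDerivAt ψ (ψ' x) x) (hψ' : Continuous ψ') (hψT : ∀ x, ψ (x + T) = ψ x + π) :
    ∫ x in (0 : ℝ)..T, u x ^ 2
      ≤ (T / π) ^ 2 * ∫ x in (0 : ℝ)..T, (u' x ^ 2 + (u x * ψ' x) ^ 2) := by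
  set z : ℝ → ℂ := fun x ↦ u x * exp (ψ x * I)
  set z' : ℝ → ℂ := fun x ↦ (u' x + (u x * ψ' x : ℝ) * I) * exp (ψ x * I)
  have hz (x : ℝ) : HasDerivAt z (z' x) x :=
    ((hu x).ofReal_comp.mul ((hψ x).ofReal_comp.mul_const I).cexp).congr_deriv (by
      simp only [z']
      push_cast
      ring)
  have hz' : Continuous z' := by
    have huc : Continuous u := Differentiable.continuous fun x ↦ (hu x).differentiableAt
    have hψc : Continuous ψ := Differentiable.continuous fun x ↦ (hψ x).differentiableAt
    fun_prop
  have hanti : Function.Antiperiodic z T := fun x ↦ by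
    simp only [z, hper x, hψT x, ofReal_add, add_mul, Complex.exp_add, exp_pi_mul_I]
    ring
  have hnorm_z (x : ℝ) : ‖z x‖ ^ 2 = u x ^ 2 := by
    simp only [z, norm_mul, norm_exp_ofReal_mul_I, mul_one, norm_real, Real.norm_eq_abs, sq_abs]
  have hnorm_z' (x : ℝ) : ‖z' x‖ ^ 2 = u' x ^ 2 + (u x * ψ' x) ^ 2 := by
    simp only [z', norm_mul, norm_exp_ofReal_mul_I, mul_one, Complex.sq_norm, normSq_add_mul_I]
  simpa only [hnorm_z, hnorm_z'] using hanti.intervalIntegral_norm_sq_le hT hz hz'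

theorem intervalIntegral_sq_le_of_weight {T : ℝ} (hT : 0 < T) {u u' w : ℝ → ℝ}
    (hper : Function.Periodic u T) (hu : ∀ x, HasDerivAt u (u' x) x) (hu' : Continuous u')
    (hwper : Function.Periodic w T) (hw : Continuous w) (hw0 : ∫ x in (0 : ℝ)..T, w x ≠ 0) :
    ∫ x in (0 : ℝ)..T, u x ^ 2 ≤ (T / π) ^ 2 * ((∫ x in (0 : ℝ)..T, u' x ^ 2)
      + (π / ∫ x in (0 : ℝ)..T, w x) ^ 2 * ∫ x in (0 : ℝ)..T, (u x * w x) ^ 2) := by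
  set c := π / ∫ x in (0 : ℝ)..T, w x
  have hψ (x : ℝ) : HasDerivAt (fun y ↦ c * ∫ t in (0 : ℝ)..y, w t) (c * w x) x :=
    (hw.integral_hasStrictDerivAt 0 x).hasDerivAt.const_mul c
  have hψT (x : ℝ) : c * ∫ t in (0 : ℝ)..x + T, w t = c * (∫ t in (0 : ℝ)..x, w t) + π := by
    rw [hwper.intervalIntegral_add_eq_add 0 x fun _ _ ↦ hw.intervalIntegrable _ _, zero_add,
      mul_add, div_mul_cancel₀ π hw0]
  have huc : Continuous u := Differentiable.continuous fun x ↦ (hu x).differentiableAt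
  have h := intervalIntegral_sq_le_of_phase hT hper hu hu' hψ (by fun_prop) hψT
  have hsplit : ∫ x in (0 : ℝ)..T, (u' x ^ 2 + (u x * (c * w x)) ^ 2)
      = (∫ x in (0 : ℝ)..T, u' x ^ 2) + c ^ 2 * ∫ x in (0 : ℝ)..T, (u x * w x) ^ 2 := by
    rw [← intervalIntegral.integral_const_mul, ← intervalIntegral.integral_add
      ((show Continuous fun x ↦ u' x ^ 2 by fun_prop).intervalIntegrable _ _)
      ((show Continuous fun x ↦ c ^ 2 * (u x * w x) ^ 2 by fun_prop).intervalIntegrable _ _)]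
    congr 1 with x
    ring
  rwa [hsplit] at h

/-- Exner–Harrell–Loss inequality on the circle, with the uniform probability
measure `dσ = (2π)⁻¹ dθ`, for positive `C¹` `2π`-periodic functions. -/
theorem exner_harrell_loss (u : ℝ → ℝ) (hper : Function.Periodic u (2 * π))
    (hu : ContDiff ℝ 1 u) (hpos : ∀ θ, 0 < u θ) :
    (∫ θ in (0:ℝ)..(2 * π), (deriv u θ)^2) / (2 * π)
      + (1/4) * ((∫ θ in (0:ℝ)..(2 * π), (u θ)⁻¹^2) / (2 * π))⁻¹
    ≥ (1/4) * ((∫ θ in (0:ℝ)..(2 * π), (u θ)^2) / (2 * π)) := by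
  have hcont : Continuous fun θ ↦ (u θ)⁻¹ ^ 2 :=
    (hu.continuous.inv₀ fun θ ↦ (hpos θ).ne').pow 2
  have hweight (θ : ℝ) : (u θ * (u θ)⁻¹ ^ 2) ^ 2 = (u θ)⁻¹ ^ 2 := by
    have := (hpos θ).ne'
    field_simp
  have hB : 0 < ∫ θ in (0:ℝ)..(2 * π), (u θ)⁻¹ ^ 2 :=
    intervalIntegral.intervalIntegral_pos_of_pos_on (hcont.intervalIntegrable _ _)
      (fun θ _ ↦ by have := hpos θ; positivity) (by positivity)
  have h := intervalIntegral_sq_le_of_weight (by positivity) hper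
    (fun θ ↦ (hu.differentiable one_ne_zero θ).hasDerivAt) (hu.continuous_deriv le_rfl)
    (fun θ ↦ by simp only [hper θ]) hcont hB.ne'
  simp only [hweight] at h
  set A := ∫ θ in (0:ℝ)..(2 * π), (deriv u θ) ^ 2
  set B := ∫ θ in (0:ℝ)..(2 * π), (u θ)⁻¹ ^ 2
  set C := ∫ θ in (0:ℝ)..(2 * π), (u θ) ^ 2
  have key : C ≤ 4 * (A + π ^ 2 / B) := by
    have h4 : (2 * π / π) ^ 2 = 4 := by field_simp; norm_num
    rwa [h4, div_pow, div_mul_eq_mul_div, pow_two B, mul_div_mul_right _ _ hB.ne'] at h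
  rw [ge_iff_le, inv_div]
  calc 1 / 4 * (C / (2 * π)) ≤ (A + π ^ 2 / B) / (2 * π) := by
        rw [← mul_div_assoc]; gcongr; linarith
    _ = A / (2 * π) + 1 / 4 * (2 * π / B) := by field_simp; ring
end

section
/- Let $a\in(0,1/2)$ and $p>2$. Define $\lambda_\star = \frac{4(1-3a^2)-a^2p^2}{p^2-4}$ and $\lambda_\bullet = \frac{8\left(\sqrt{p^4 - a^2(p-2)^2(p+2)(3p-2)}+2\right) - 4p(p+4)}{(p-2)^3(p+2)} - a^2$. Then $\lambda_\bullet - \lambda_\star = \frac{8}{(p-2)^3(p+2)}\left(\sqrt{p^4 - a^2(p-2)^2(3p^2+4p-4)} + 2a^2(p-2)^2 - p^2\right)$, and this quantity is strictly positive. -/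
/-!
Writing `s` for the square root, `λ• - λ⋆ = 8 (s + 2a²(p-2)² - p²) / ((p-2)³(p+2))`, and the
radicand exceeds `(p² - 2a²(p-2)²)²` by `a²(p-2)⁴(1-4a²)`, which is positive for `0 < |a| < 1/2`
and `p ≠ 2`. Hence `s > p² - 2a²(p-2)²`.
-/

lemma lambdaBullet_sub_lambdaStar_eq {a p : ℝ} (hp2 : p - 2 ≠ 0) (hp2' : p + 2 ≠ 0) (s : ℝ) :
    ((8 * (s + 2) - 4 * p * (p + 4)) / ((p-2)^3 * (p+2)) - a^2)
        - (4 * (1 - 3 * a^2) - a^2 * p^2) / (p^2 - 4)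
      = 8 / ((p-2)^3 * (p+2)) * (s + 2 * a^2 * (p-2)^2 - p^2) := by
  have hp4 : p^2 - 4 ≠ 0 := by
    rw [show p^2 - 4 = (p - 2) * (p + 2) by ring]
    exact mul_ne_zero hp2 hp2'
  field_simp
  ring

lemma radicand_eq_sq_add (a p : ℝ) :
    p^4 - a^2 * (p-2)^2 * (p+2) * (3*p-2)
      = (p^2 - 2 * a^2 * (p-2)^2)^2 + a^2 * (p-2)^4 * (1 - 4 * a^2) := by
  ring

lemma sub_lt_sqrt_radicand {a p : ℝ} (ha : a ≠ 0) (ha' : 4 * a^2 < 1) (hp : p - 2 ≠ 0) :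
    p^2 - 2 * a^2 * (p-2)^2 < Real.sqrt (p^4 - a^2 * (p-2)^2 * (p+2) * (3*p-2)) := by
  apply Real.lt_sqrt_of_sq_lt
  rw [radicand_eq_sq_add]
  have : 0 < a^2 * (p-2)^4 * (1 - 4 * a^2) := by
    have := sub_pos.mpr ha'
    positivity
  linarith

theorem lambda_bullet_gt_lambda_star (a p : ℝ) (ha : a ∈ Set.Ioo (0:ℝ) (1/2))
    (hp : 2 < p) :
    let lamStar := (4 * (1 - 3 * a^2) - a^2 * p^2) / (p^2 - 4)
    let lamBullet := (8 * (Real.sqrt (p^4 - a^2 * (p-2)^2 * (p+2) * (3*p-2)) + 2)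
        - 4 * p * (p + 4)) / ((p-2)^3 * (p+2)) - a^2
    lamBullet - lamStar = 8 / ((p-2)^3 * (p+2)) *
        (Real.sqrt (p^4 - a^2 * (p-2)^2 * (3*p^2 + 4*p - 4))
          + 2 * a^2 * (p-2)^2 - p^2)
    ∧ 0 < lamBullet - lamStar := by
  obtain ⟨ha0, ha1⟩ := ha
  intro lamStar lamBullet
  have hp2 : 0 < p - 2 := by linarith
  have hp2' : 0 < p + 2 := by linarith
  have hdiff := lambdaBullet_sub_lambdaStar_eq (a := a) hp2.ne' hp2'.ne'
    (Real.sqrt (p^4 - a^2 * (p-2)^2 * (p+2) * (3*p-2)))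
  have hlt := sub_lt_sqrt_radicand ha0.ne' (by nlinarith) hp2.ne'
  rw [show p^4 - a^2 * (p-2)^2 * (3*p^2 + 4*p - 4)
      = p^4 - a^2 * (p-2)^2 * (p+2) * (3*p-2) by ring]
  refine ⟨hdiff, ?_⟩
  rw [hdiff]
  have hsum : 0 < Real.sqrt (p^4 - a^2 * (p-2)^2 * (p+2) * (3*p-2))
      + 2 * a^2 * (p-2)^2 - p^2 := by linarith
  positivity
end

section
/- For any real numbers $a\in(0,1/2)$ and $p>2$, one has $\lambda_\bullet < \lambda_{\mathrm{FS}}$, where $\lambda_\bullet = \frac{8\left(\sqrt{p^4 - a^2(p-2)^2(p+2)(3p-2)}+2\right) - 4p(p+4)}{(p-2)^3(p+2)} - a^2$ and $\lambda_{\mathrm{FS}} = \frac{4(1+a^2) - a^2 p^2}{p^2-4}$. -/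
/-!
Write `s` for the square root in `λ_•`. As a function of `s`, `λ_•` is affine with positive slope
`8 / ((p-2)^3 (p+2))`, and at `s = p^2` it equals `λ_FS` exactly. Since `a ≠ 0`, the radicand is
strictly below `p^4`, so `s < p^2` and hence `λ_• < λ_FS`.
-/

lemma sqrt_radicand_lt_sq {a p : ℝ} (ha : a ≠ 0) (hp : 2 < p) :
    Real.sqrt (p^4 - a^2 * (p-2)^2 * (p+2) * (3*p-2)) < p^2 := by
  have hcorr : 0 < a^2 * (p-2)^2 * (p+2) * (3*p-2) := by
    have : 0 < p - 2 := by linarith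
    have : 0 < 3*p - 2 := by linarith
    positivity
  rw [Real.sqrt_lt' (by positivity)]
  nlinarith

lemma lambda_bullet_eq_lambda_FS_sub (a p s : ℝ) (hp : 2 < p) :
    (8 * (s + 2) - 4 * p * (p + 4)) / ((p-2)^3 * (p+2)) - a^2
      = (4 * (1 + a^2) - a^2 * p^2) / (p^2 - 4) - 8 * (p^2 - s) / ((p-2)^3 * (p+2)) := by
  have h2 : p - 2 ≠ 0 := by linarith
  have h4 : p^2 - 4 ≠ 0 := by nlinarith
  field_simp
  ring

theorem lambda_bullet_lt_lambda_FS (a p : ℝ) (ha : a ∈ Set.Ioo (0:ℝ) (1/2))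
    (hp : 2 < p) :
    (8 * (Real.sqrt (p^4 - a^2 * (p-2)^2 * (p+2) * (3*p-2)) + 2)
        - 4 * p * (p + 4)) / ((p-2)^3 * (p+2)) - a^2
      < (4 * (1 + a^2) - a^2 * p^2) / (p^2 - 4) := by
  have hs := sqrt_radicand_lt_sq ha.1.ne' hp
  have hden : 0 < (p-2)^3 * (p+2) := by
    have : 0 < p - 2 := by linarith
    positivity
  have hgap : 0 < 8 * (p^2 - Real.sqrt (p^4 - a^2 * (p-2)^2 * (p+2) * (3*p-2)))
      / ((p-2)^3 * (p+2)) := div_pos (by linarith) hden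
  rw [lambda_bullet_eq_lambda_FS_sub a p _ hp]
  linarith
end
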